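/- arXiv:1001.3463 — 5 statements merged into one kernel-verified Lean document; each statement's English description precedes it below -/
import Mathlib

section
/- Let m ≥ 2 be an integer, let (X,d) be a compact connected metric space in which every pair of points x,y is joined by a unit-speed geodesic (a map γ:[0,d(x,y)]→X with γ(0)=x, γ(d(x,y))=y and d(γ(s),γ(t))=|s−t| for all s,t), let μ be a finite Borel measure on X, and let f:X→[0,∞) be μ-integrable and μ-measurable with f^{m−1} μ-integrable. Let c>0 and δ∈(0,ω_m) be constants satisfying m·δ + δ^{(2m−3)/(m−1)} ≤ c^{−1}·δ^{(m−1)/m}. Assume that for every x∈X: (i) the function r ↦ V(x,r) is continuous and positive on (0,∞); (ii) V(x,r)/r^m → ω_m as r→0⁺; and (iii) for every r>0, V(x,r)^{(m−1)/m} ≤ c·( D⁺V(x,·)(r) + ∫_{B(x,r)} f dμ ). Then the diameter of (X,d) satisfies diam(X) ≤ 4·δ^{1−m}·∫_X f^{m−1} dμ. (This is a metric-measure formulation of the paper's main diameter estimate, where for a closed m-manifold isometrically immersed in a Riemannian manifold, f = |H| is the length of the mean curvature vector and hypothesis (iii) is the differential inequality that the Hoffman–Spruck Sobolev inequality yields when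 applied to distance-function cutoffs, valid under the paper's conditions b²(1−α)^{−2/m}(ω_m^{−1}Vol(M))^{2/m} ≤ 1 and 2ρ₀ ≤ R̄(M) with c = c(m,α).) -/
open MeasureTheory Filter Set

/-- The volume `ω_m` of the unit ball in `ℝ^m`. -/
noncomputable def unitBallVolume (m : ℕ) : ℝ :=
  (volume (Metric.ball (0 : EuclideanSpace ℝ (Fin m)) 1)).toReal

/-!
Suppose some `z` had `∫_{B(z,r)} f^(m-1) < δ^(m-1) r` for every `r > 0`. Wherever `V(z, ·)` touches
the barrier `r ↦ δ r^m`, Jensen's inequality gives `∫_{B(z,r)} f < δ^((2m-3)/(m-1)) r^(m-1)`, and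
the Sobolev inequality together with the condition on `δ` then forces `D⁺V(z, ·)(r) > m δ r^(m-1)`.
Since `V(z, r) > δ r^m` for small `r` (as `δ < ω_m`), `V(z, ·)` stays above the barrier for all
`r`, contradicting `μ X < ∞`. So every `z` has a radius `ρ z > 0` with
`δ^(m-1) ρ z ≤ ∫_{B(z, ρ z)} f^(m-1)`.

The balls `B(γ t, ρ (γ t))` centred on a geodesic from `x` to `y` cover it; a chain of the
corresponding intervals covering `[0, d(x,y)]` splits into two families of pairwise disjoint
intervals, whose balls are disjoint because `γ` is an isometry. Their radii sum to at least
`d(x,y)/2`, and each family contributes at most `δ^(1-m) ∫ f^(m-1)`.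
-/

open Topology Metric

noncomputable def lowerRightDiniDeriv (V : ℝ → ℝ) (x : ℝ) : ℝ :=
  liminf (fun s => (V (x + s) - V x) / s) (𝓝[>] 0)

namespace Monotone

variable {V : ℝ → ℝ}

theorem eventually_lt_slope_of_lt_lowerRightDiniDeriv (hV : Monotone V) {x b : ℝ}
    (hb : b < lowerRightDiniDeriv V x) : ∀ᶠ z in 𝓝[>] x, b < slope V x z := by
  have hquot : ∀ᶠ s in 𝓝[>] (0 : ℝ), 0 ≤ (V (x + s) - V x) / s :=
    eventually_mem_nhdsWithin.mono fun s (hs : 0 < s) =>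
      div_nonneg (sub_nonneg.2 (hV (by linarith))) hs.le
  have hnhds : 𝓝[>] x = map (x + ·) (𝓝[>] 0) := by simp
  rw [hnhds, eventually_map]
  filter_upwards [eventually_lt_of_lt_liminf hb (isBoundedUnder_of_eventually_ge hquot)]
    with s hs
  rwa [slope_def_field, add_sub_cancel_left]

theorem le_of_deriv_lt_lowerRightDiniDeriv (hV : Monotone V) {W W' : ℝ → ℝ} {a b : ℝ}
    (hab : a ≤ b) (hVc : ContinuousOn V (Icc a b)) (hW : ∀ x, HasDerivAt W (W' x) x)
    (ha : W a ≤ V a) (htouch : ∀ x ∈ Ico a b, V x = W x → W' x < lowerRightDiniDeriv V x) :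
    W b ≤ V b := by
  have hslope : ∀ x ∈ Ico a b, ∀ r, -lowerRightDiniDeriv V x < r →
      ∃ᶠ z in 𝓝[>] x, slope (fun t => -V t) x z < r := fun x _ r hr =>
    ((hV.eventually_lt_slope_of_lt_lowerRightDiniDeriv (neg_lt.1 hr)).mono
      fun z hz => by rw [slope_neg]; linarith).frequently
  have := image_le_of_liminf_slope_right_lt_deriv_boundary (B := fun t => -W t)
    (B' := fun t => -W' t) hVc.neg hslope (neg_le_neg ha) (fun x => (hW x).neg)
    (fun x hx hVW => neg_lt_neg (htouch x hx (neg_inj.1 hVW))) (right_mem_Icc.2 hab)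
  simpa using this

theorem le_of_eventually_lt_of_deriv_lt_lowerRightDiniDeriv (hV : Monotone V)
    (hVc : ContinuousOn V (Ioi 0)) {W W' : ℝ → ℝ} (hW : ∀ x, HasDerivAt W (W' x) x)
    (hlt : ∀ᶠ r in 𝓝[>] 0, W r < V r)
    (htouch : ∀ x, 0 < x → V x = W x → W' x < lowerRightDiniDeriv V x) {R : ℝ} (hR : 0 < R) :
    W R ≤ V R := by
  obtain ⟨a, haV, ha0, haR⟩ := (hlt.and (Ioo_mem_nhdsGT hR)).exists
  exact hV.le_of_deriv_lt_lowerRightDiniDeriv haR.le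
    (hVc.mono fun t ht => ha0.trans_le ht.1) hW haV.le
    fun x hx => htouch x (ha0.trans_le hx.1)

end Monotone

theorem pow_setIntegral_le_measureReal_pow_mul_setIntegral_pow {α : Type*} [MeasurableSpace α]
    {μ : Measure α} {s : Set α} {f : α → ℝ} {n : ℕ} (hn : n ≠ 0) (hs : μ s ≠ ⊤)
    (hf0 : ∀ᵐ x ∂μ.restrict s, 0 ≤ f x) (hf : IntegrableOn f s μ)
    (hfn : IntegrableOn (fun x => f x ^ n) s μ) :
    (∫ x in s, f x ∂μ) ^ n ≤ μ.real s ^ (n - 1) * ∫ x in s, f x ^ n ∂μ := by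
  rcases eq_or_ne (μ s) 0 with hs0 | hs0
  · simp [Measure.restrict_eq_zero.2 hs0, zero_pow hn]
  have hμ : 0 < μ.real s := ENNReal.toReal_pos hs0 hs
  have hJensen := (convexOn_pow n).map_set_average_le (continuous_pow n).continuousOn isClosed_Ici
    hs0 hs hf0 hf hfn
  rw [setAverage_eq, setAverage_eq, smul_eq_mul, smul_eq_mul, inv_mul_eq_div, inv_mul_eq_div,
    div_pow, div_le_div_iff₀ (pow_pos hμ n) hμ] at hJensen
  refine le_of_mul_le_mul_right (hJensen.trans_eq ?_) hμ
  rw [mul_right_comm, pow_sub_one_mul hn, mul_comm]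

theorem setIntegral_lt_of_measureReal_eq_mul_pow {α : Type*} [MeasurableSpace α]
    {μ : Measure α} {s : Set α} {f : α → ℝ} {m : ℕ} (hm : 2 ≤ m) {δ x : ℝ} (hδ : 0 < δ)
    (hx : 0 < x) (hf0 : ∀ᵐ y ∂μ.restrict s, 0 ≤ f y) (hf : IntegrableOn f s μ)
    (hfm : IntegrableOn (fun y => f y ^ (m - 1)) s μ) (hs : μ.real s = δ * x ^ m)
    (hfs : ∫ y in s, f y ^ (m - 1) ∂μ < δ ^ (m - 1) * x) :
    ∫ y in s, f y ∂μ < δ ^ ((2 * (m : ℝ) - 3) / ((m : ℝ) - 1)) * x ^ ((m : ℝ) - 1) := by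
  obtain ⟨k, rfl⟩ := Nat.exists_eq_add_of_le' hm
  rw [show k + 2 - 1 = k + 1 from rfl] at hfm hfs
  have hμs : μ s ≠ ⊤ :=
    (ENNReal.toReal_pos_iff.1 (by rw [← measureReal_def, hs]; positivity)).2.ne
  have hpow : (δ ^ ((2 * ((k + 2 : ℕ) : ℝ) - 3) / (((k + 2 : ℕ) : ℝ) - 1)) *
      x ^ (((k + 2 : ℕ) : ℝ) - 1)) ^ (k + 1) = (δ * x ^ (k + 2)) ^ k * (δ ^ (k + 1) * x) := by
    have hδe : (2 * ((k + 2 : ℕ) : ℝ) - 3) / (((k + 2 : ℕ) : ℝ) - 1) * (k + 1 : ℕ) =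
        (2 * k + 1 : ℕ) := by
      push_cast
      rw [show (k : ℝ) + 2 - 1 = k + 1 by ring, div_mul_cancel₀ _ (by positivity)]
      ring
    have hxe : (((k + 2 : ℕ) : ℝ) - 1) * (k + 1 : ℕ) = ((k + 1) ^ 2 : ℕ) := by push_cast; ring
    rw [mul_pow, ← Real.rpow_mul_natCast hδ.le, ← Real.rpow_mul_natCast hx.le, hδe, hxe,
      Real.rpow_natCast, Real.rpow_natCast]
    ring
  refine lt_of_pow_lt_pow_left₀ (k + 1) (by positivity) ?_
  calc (∫ y in s, f y ∂μ) ^ (k + 1) ≤ μ.real s ^ k * ∫ y in s, f y ^ (k + 1) ∂μ :=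
        pow_setIntegral_le_measureReal_pow_mul_setIntegral_pow k.succ_ne_zero hμs hf0 hf hfm
    _ < (δ * x ^ (k + 2)) ^ k * (δ ^ (k + 1) * x) := by rw [hs]; gcongr
    _ = _ := hpow.symm

theorem mul_natCast_mul_pow_lt_of_rpow_le_mul_add {m : ℕ} (hm : m ≠ 0) {c δ x L I : ℝ}
    (hc : 0 < c) (hδ : 0 < δ) (hx : 0 < x)
    (hδc : (m : ℝ) * δ + δ ^ ((2 * (m : ℝ) - 3) / ((m : ℝ) - 1)) ≤
      c⁻¹ * δ ^ (((m : ℝ) - 1) / (m : ℝ)))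
    (hS : (δ * x ^ m) ^ (((m : ℝ) - 1) / (m : ℝ)) ≤ c * (L + I))
    (hI : I < δ ^ ((2 * (m : ℝ) - 3) / ((m : ℝ) - 1)) * x ^ ((m : ℝ) - 1)) :
    δ * (m * x ^ (m - 1)) < L := by
  have hxm : x ^ (m - 1) = x ^ ((m : ℝ) - 1) := by
    rw [← Real.rpow_natCast, Nat.cast_sub (Nat.one_le_iff_ne_zero.2 hm), Nat.cast_one]
  have hV : (δ * x ^ m) ^ (((m : ℝ) - 1) / (m : ℝ)) =
      δ ^ (((m : ℝ) - 1) / (m : ℝ)) * x ^ ((m : ℝ) - 1) := by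
    rw [Real.mul_rpow hδ.le (by positivity), ← Real.rpow_natCast, ← Real.rpow_mul hx.le]
    field_simp
  rw [hV] at hS
  rw [hxm]
  have hy : 0 < x ^ ((m : ℝ) - 1) := by positivity
  have hδcy := mul_le_mul_of_nonneg_left hδc (mul_pos hc hy).le
  rw [show c * x ^ ((m : ℝ) - 1) * (c⁻¹ * δ ^ (((m : ℝ) - 1) / (m : ℝ))) =
    δ ^ (((m : ℝ) - 1) / (m : ℝ)) * x ^ ((m : ℝ) - 1) by field_simp] at hδcy
  refine lt_of_mul_lt_mul_left ?_ hc.le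
  linarith [mul_lt_mul_of_pos_left hI hc]

theorem Real.add_le_dist_of_add_le_sub {t u a b : ℝ} (h : t + a ≤ u - b) : a + b ≤ dist t u := by
  rw [Real.dist_eq, abs_sub_comm]
  exact (by linarith : a + b ≤ u - t).trans (le_abs_self _)

theorem Finset.exists_mem_ball_forall_add_le {s : Finset ℝ} {r : ℝ → ℝ} {a : ℝ}
    (ha : a ∈ ⋃ t ∈ s, ball t (r t)) :
    ∃ p ∈ s, a ∈ ball p (r p) ∧ ∀ q ∈ s, a ∈ ball q (r q) → q + r q ≤ p + r p := by
  classical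
  set sa := s.filter fun t => a ∈ ball t (r t)
  have hne : sa.Nonempty := by
    simpa only [sa, Finset.filter_nonempty_iff, mem_iUnion, exists_prop] using ha
  obtain ⟨p, hp, hmax⟩ := sa.exists_max_image (fun t => t + r t) hne
  rw [Finset.mem_filter] at hp
  exact ⟨p, hp.1, hp.2, fun q hq hqa => hmax q (Finset.mem_filter.2 ⟨hq, hqa⟩)⟩

theorem Icc_add_subset_iUnion_ball_erase {s : Finset ℝ} {r : ℝ → ℝ} {a b p : ℝ}
    (hs : Icc a b ⊆ ⋃ t ∈ s, ball t (r t)) (ha : a ≤ p + r p) :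
    Icc (p + r p) b ⊆ ⋃ t ∈ s.erase p, ball t (r t) := by
  intro x hx
  obtain ⟨q, hqs, hxq⟩ := mem_iUnion₂.1 (hs ⟨ha.trans hx.1, hx.2⟩)
  refine mem_iUnion₂.2 ⟨q, Finset.mem_erase.2 ⟨?_, hqs⟩, hxq⟩
  rintro rfl
  rw [Real.ball_eq_Ioo] at hxq
  exact hx.1.not_gt hxq.2

/-- The last three conjuncts, which place the two families relative to `a`, are what lets the
induction (removing the interval through `a` that reaches furthest right) go through. -/
theorem exists_separated_subfamilies_of_Icc_subset_iUnion_ball (r : ℝ → ℝ) (s : Finset ℝ) :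
    ∀ {a b : ℝ}, a ≤ b → Icc a b ⊆ ⋃ t ∈ s, ball t (r t) →
    ∃ s₁ ⊆ s, ∃ s₂ ⊆ s, (s₁ : Set ℝ).Pairwise (fun t u => r t + r u ≤ dist t u) ∧
      (s₂ : Set ℝ).Pairwise (fun t u => r t + r u ≤ dist t u) ∧
      b - a ≤ 2 * (∑ t ∈ s₁, r t + ∑ t ∈ s₂, r t) ∧
      (∀ t ∈ s₁, a < t + r t) ∧ (∀ t ∈ s₂, a < t + r t) ∧ ∀ t ∈ s₂, a ≤ t - r t := by
  induction s using Finset.strongInduction with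
  | H s ih =>
  intro a b hab hs
  obtain ⟨p, hps, hpa, hpmax⟩ := Finset.exists_mem_ball_forall_add_le (hs ⟨le_rfl, hab⟩)
  rw [Real.ball_eq_Ioo, mem_Ioo] at hpa
  by_cases hpb : b < p + r p
  · refine ⟨{p}, by simpa using hps, ∅, by simp, by simp, by simp, ?_, by simpa using hpa.2,
      by simp, by simp⟩
    simp only [Finset.sum_singleton, Finset.sum_empty]
    linarith
  push Not at hpb
  obtain ⟨s₁, hs₁, s₂, hs₂, hsep₁, hsep₂, hsum, hright₁, hright₂, hleft₂⟩ :=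
    ih _ (Finset.erase_ssubset hps) hpb (Icc_add_subset_iUnion_ball_erase hs hpa.2.le)
  have hp₂ : p ∉ s₂ := fun hp => by linarith [hleft₂ p hp]
  have hleft₁ : ∀ t ∈ s₁, a ≤ t - r t := by
    intro t ht
    by_contra! hlt
    have := hpmax t (Finset.mem_of_mem_erase (hs₁ ht)) (by
      rw [Real.ball_eq_Ioo]; exact ⟨hlt, by linarith [hright₁ t ht]⟩)
    linarith [hright₁ t ht]
  refine ⟨insert p s₂, ?_, s₁, hs₁.trans (s.erase_subset p), ?_, hsep₁, ?_, ?_, ?_, hleft₁⟩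
  · exact Finset.insert_subset hps (hs₂.trans (s.erase_subset p))
  · rw [Finset.coe_insert, Set.pairwise_insert]
    refine ⟨hsep₂, fun t ht _ => ⟨Real.add_le_dist_of_add_le_sub (hleft₂ t ht), ?_⟩⟩
    rw [add_comm, dist_comm]
    exact Real.add_le_dist_of_add_le_sub (hleft₂ t ht)
  · rw [Finset.sum_insert hp₂]
    linarith
  · intro t ht
    rcases Finset.mem_insert.1 ht with rfl | ht
    · exact hpa.2
    · linarith [hright₂ t ht]
  · intro t ht
    linarith [hright₁ t ht]

theorem sum_setIntegral_ball_le_integral {X ι : Type*} [PseudoMetricSpace X] [MeasurableSpace X]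
    [OpensMeasurableSpace X] {μ : Measure X} {g : X → ℝ} (hg0 : 0 ≤ g) (hg : Integrable g μ)
    {t : Finset ι} {z : ι → X} {r : ι → ℝ}
    (ht : (t : Set ι).Pairwise fun i j => r i + r j ≤ dist (z i) (z j)) :
    ∑ i ∈ t, ∫ w in ball (z i) (r i), g w ∂μ ≤ ∫ w, g w ∂μ := by
  rw [← integral_biUnion_finset t (s := fun i => ball (z i) (r i)) (fun i _ => measurableSet_ball)
    (ht.mono' fun i j => ball_disjoint_ball) fun i _ => hg.integrableOn]
  exact setIntegral_le_integral hg (Eventually.of_forall hg0)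

theorem mul_le_four_mul_integral_of_isometryOn_Icc {X : Type*} [PseudoMetricSpace X]
    [MeasurableSpace X] [OpensMeasurableSpace X] {μ : Measure X} {g : X → ℝ} (hg0 : 0 ≤ g)
    (hg : Integrable g μ) {K : ℝ} (hK : 0 ≤ K) {ρ : X → ℝ} (hρ0 : ∀ z, 0 < ρ z)
    (hρ : ∀ z, K * ρ z ≤ ∫ w in ball z (ρ z), g w ∂μ) {γ : ℝ → X} {L : ℝ} (hL : 0 ≤ L)
    (hγ : ∀ s ∈ Icc 0 L, ∀ t ∈ Icc 0 L, dist (γ s) (γ t) = dist s t) :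
    K * L ≤ 4 * ∫ w, g w ∂μ := by
  obtain ⟨s, hsL, hcov⟩ := isCompact_Icc.elim_nhds_subcover (fun t => ball t (ρ (γ t)))
    fun t _ => ball_mem_nhds t (hρ0 (γ t))
  obtain ⟨s₁, hs₁, s₂, hs₂, hsep₁, hsep₂, hsum, -⟩ :=
    exists_separated_subfamilies_of_Icc_subset_iUnion_ball (fun t => ρ (γ t)) s hL hcov
  have hfamily : ∀ s' ⊆ s, (s' : Set ℝ).Pairwise (fun t u => ρ (γ t) + ρ (γ u) ≤ dist t u) →
      K * ∑ t ∈ s', ρ (γ t) ≤ ∫ w, g w ∂μ := fun s' hs' hsep => calc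
    K * ∑ t ∈ s', ρ (γ t) ≤ ∑ t ∈ s', ∫ w in ball (γ t) (ρ (γ t)), g w ∂μ := by
      rw [Finset.mul_sum]; exact Finset.sum_le_sum fun t _ => hρ (γ t)
    _ ≤ ∫ w, g w ∂μ := sum_setIntegral_ball_le_integral hg0 hg fun t ht u hu htu => by
      dsimp only
      rw [hγ t (hsL t (hs' ht)) u (hsL u (hs' hu))]; exact hsep ht hu htu
  nlinarith [hfamily s₁ hs₁ hsep₁, hfamily s₂ hs₂ hsep₂, mul_le_mul_of_nonneg_left hsum hK]

section VolumeGrowth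

variable {X : Type*} [PseudoMetricSpace X] [MeasurableSpace X] {μ : Measure X} [IsFiniteMeasure μ]

theorem mul_pow_le_measureReal_ball {m : ℕ} (hm : 2 ≤ m) {f : X → ℝ} (hf0 : ∀ x, 0 ≤ f x)
    (hf : Integrable f μ) (hfm : Integrable (fun x => f x ^ (m - 1)) μ) {c δ ω : ℝ}
    (hc : 0 < c) (hδ : 0 < δ) (hδω : δ < ω)
    (hδc : (m : ℝ) * δ + δ ^ ((2 * (m : ℝ) - 3) / ((m : ℝ) - 1)) ≤
      c⁻¹ * δ ^ (((m : ℝ) - 1) / (m : ℝ)))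
    {z : X} (hVc : ContinuousOn (fun r => μ.real (ball z r)) (Ioi 0))
    (hVlim : Tendsto (fun r => μ.real (ball z r) / r ^ m) (𝓝[>] 0) (𝓝 ω))
    (hSob : ∀ r, 0 < r → μ.real (ball z r) ^ (((m : ℝ) - 1) / (m : ℝ)) ≤
      c * (lowerRightDiniDeriv (fun r => μ.real (ball z r)) r + ∫ w in ball z r, f w ∂μ))
    (hsmall : ∀ r, 0 < r → ∫ w in ball z r, f w ^ (m - 1) ∂μ < δ ^ (m - 1) * r)
    {R : ℝ} (hR : 0 < R) : δ * R ^ m ≤ μ.real (ball z R) := by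
  have hmono : Monotone fun r => μ.real (ball z r) := fun r s hrs =>
    measureReal_mono (ball_subset_ball hrs)
  have hlt : ∀ᶠ r in 𝓝[>] 0, δ * r ^ m < μ.real (ball z r) := by
    filter_upwards [hVlim.eventually (eventually_gt_nhds hδω), self_mem_nhdsWithin]
      with r hr (hr0 : 0 < r)
    exact (lt_div_iff₀ (by positivity)).1 hr
  refine hmono.le_of_eventually_lt_of_deriv_lt_lowerRightDiniDeriv hVc
    (fun x => (hasDerivAt_pow m x).const_mul δ) hlt (fun x hx hVx => ?_) hR
  refine mul_natCast_mul_pow_lt_of_rpow_le_mul_add (by omega) hc hδ hx hδc (hVx ▸ hSob x hx) ?_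
  exact setIntegral_lt_of_measureReal_eq_mul_pow hm hδ hx (ae_of_all _ fun w => hf0 w)
    hf.integrableOn hfm.integrableOn hVx (hsmall x hx)

theorem exists_pos_mul_le_setIntegral_ball {m : ℕ} (hm : 2 ≤ m) {f : X → ℝ} (hf0 : ∀ x, 0 ≤ f x)
    (hf : Integrable f μ) (hfm : Integrable (fun x => f x ^ (m - 1)) μ) {c δ ω : ℝ}
    (hc : 0 < c) (hδ : 0 < δ) (hδω : δ < ω)
    (hδc : (m : ℝ) * δ + δ ^ ((2 * (m : ℝ) - 3) / ((m : ℝ) - 1)) ≤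
      c⁻¹ * δ ^ (((m : ℝ) - 1) / (m : ℝ)))
    {z : X} (hVc : ContinuousOn (fun r => μ.real (ball z r)) (Ioi 0))
    (hVlim : Tendsto (fun r => μ.real (ball z r) / r ^ m) (𝓝[>] 0) (𝓝 ω))
    (hSob : ∀ r, 0 < r → μ.real (ball z r) ^ (((m : ℝ) - 1) / (m : ℝ)) ≤
      c * (lowerRightDiniDeriv (fun r => μ.real (ball z r)) r + ∫ w in ball z r, f w ∂μ)) :
    ∃ r, 0 < r ∧ δ ^ (m - 1) * r ≤ ∫ w in ball z r, f w ^ (m - 1) ∂μ := by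
  by_contra! hsmall
  have hbarrier : Tendsto (fun R => δ * R ^ m) atTop atTop :=
    (tendsto_pow_atTop (by omega)).const_mul_atTop hδ
  obtain ⟨R, hRμ, hR⟩ :=
    ((hbarrier.eventually_gt_atTop (μ.real univ)).and (eventually_gt_atTop 0)).exists
  have := mul_pow_le_measureReal_ball hm hf0 hf hfm hc hδ hδω hδc hVc hVlim hSob hsmall hR
  linarith [measureReal_mono (μ := μ) (subset_univ (ball z R))]

end VolumeGrowth

theorem diameter_bound_of_sobolev_inequality_general
    {X : Type*} [MetricSpace X]
    [MeasurableSpace X] [BorelSpace X]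
    (μ : Measure X) [IsFiniteMeasure μ]
    (m : ℕ) (hm : 2 ≤ m)
    (geodesic : ∀ x y : X, ∃ γ : ℝ → X, γ 0 = x ∧ γ (dist x y) = y ∧
      ∀ s ∈ Set.Icc (0 : ℝ) (dist x y), ∀ t ∈ Set.Icc (0 : ℝ) (dist x y),
        dist (γ s) (γ t) = |s - t|)
    (f : X → ℝ) (hf0 : ∀ x, 0 ≤ f x)
    (hfint : Integrable f μ) (hfmint : Integrable (fun x => f x ^ (m - 1)) μ)
    (c δ : ℝ) (hc : 0 < c) (hδ0 : 0 < δ) (hδω : δ < unitBallVolume m)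
    (hδc : (m : ℝ) * δ + δ ^ ((2 * (m : ℝ) - 3) / ((m : ℝ) - 1)) ≤
      c⁻¹ * δ ^ (((m : ℝ) - 1) / (m : ℝ)))
    (hVcont : ∀ x : X,
      ContinuousOn (fun r : ℝ => (μ (Metric.ball x r)).toReal) (Set.Ioi 0))
    (hVlim : ∀ x : X,
      Tendsto (fun r : ℝ => (μ (Metric.ball x r)).toReal / r ^ m)
        (nhdsWithin 0 (Set.Ioi 0)) (nhds (unitBallVolume m)))
    (hSob : ∀ x : X, ∀ r : ℝ, 0 < r →
      (μ (Metric.ball x r)).toReal ^ (((m : ℝ) - 1) / (m : ℝ)) ≤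
        c * (Filter.liminf
              (fun s : ℝ =>
                ((μ (Metric.ball x (r + s))).toReal - (μ (Metric.ball x r)).toReal) / s)
              (nhdsWithin 0 (Set.Ioi 0))
            + ∫ y in Metric.ball x r, f y ∂μ)) :
    Metric.diam (Set.univ : Set X) ≤ 4 * δ ^ (1 - (m : ℝ)) * ∫ x, f x ^ (m - 1) ∂μ := by
  choose ρ hρ0 hρ using fun z => exists_pos_mul_le_setIntegral_ball hm hf0 hfint hfmint hc hδ0
    hδω hδc (hVcont z) (hVlim z) (hSob z)
  have hδm : δ ^ (1 - (m : ℝ)) * δ ^ (m - 1) = 1 := by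
    rw [← Real.rpow_natCast, ← Real.rpow_add hδ0, Nat.cast_sub (by omega)]
    simp
  have hI : 0 ≤ ∫ x, f x ^ (m - 1) ∂μ := integral_nonneg fun x => pow_nonneg (hf0 x) _
  refine Metric.diam_le_of_forall_dist_le (by positivity) fun x _ y _ => ?_
  obtain ⟨γ, -, -, hγ⟩ := geodesic x y
  have hK := mul_le_four_mul_integral_of_isometryOn_Icc (fun w => pow_nonneg (hf0 w) _) hfmint
    (by positivity) hρ0 hρ dist_nonneg fun s hs t ht => (hγ s hs t ht).trans (Real.dist_eq s t).symm
  calc dist x y = δ ^ (1 - (m : ℝ)) * (δ ^ (m - 1) * dist x y) := by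
        rw [← mul_assoc, hδm, one_mul]
    _ ≤ 4 * δ ^ (1 - (m : ℝ)) * ∫ x, f x ^ (m - 1) ∂μ := by
      rw [mul_comm 4, mul_assoc]; gcongr

/-- **Main diameter estimate (metric-measure form).** If `(X,d)` is a compact connected
geodesic metric space with a finite Borel measure `μ`, `f : X → [0,∞)` with `f` and
`f^(m-1)` integrable, and `c > 0`, `δ ∈ (0, ω_m)` satisfy
`m δ + δ^((2m-3)/(m-1)) ≤ c⁻¹ δ^((m-1)/m)`, and for each `x` the volume function
`V(x,r) = μ(B(x,r))` is continuous and positive on `(0,∞)`, satisfies `V(x,r)/r^m → ω_m`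
as `r → 0⁺`, and the Sobolev-type differential inequality
`V(x,r)^((m-1)/m) ≤ c (D⁺V(x,·)(r) + ∫_{B(x,r)} f dμ)` holds for all `r > 0`,
then `diam X ≤ 4 δ^(1-m) ∫_X f^(m-1) dμ`. -/
theorem diameter_bound_of_sobolev_inequality
    {X : Type*} [MetricSpace X] [CompactSpace X] [ConnectedSpace X]
    [MeasurableSpace X] [BorelSpace X]
    (μ : Measure X) [IsFiniteMeasure μ]
    (m : ℕ) (hm : 2 ≤ m)
    (geodesic : ∀ x y : X, ∃ γ : ℝ → X, γ 0 = x ∧ γ (dist x y) = y ∧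
      ∀ s ∈ Set.Icc (0 : ℝ) (dist x y), ∀ t ∈ Set.Icc (0 : ℝ) (dist x y),
        dist (γ s) (γ t) = |s - t|)
    (f : X → ℝ) (hf0 : ∀ x, 0 ≤ f x) (hfmeas : Measurable f)
    (hfint : Integrable f μ) (hfmint : Integrable (fun x => f x ^ (m - 1)) μ)
    (c δ : ℝ) (hc : 0 < c) (hδ0 : 0 < δ) (hδω : δ < unitBallVolume m)
    (hδc : (m : ℝ) * δ + δ ^ ((2 * (m : ℝ) - 3) / ((m : ℝ) - 1)) ≤
      c⁻¹ * δ ^ (((m : ℝ) - 1) / (m : ℝ)))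
    (hVcont : ∀ x : X,
      ContinuousOn (fun r : ℝ => (μ (Metric.ball x r)).toReal) (Set.Ioi 0))
    (hVpos : ∀ x : X, ∀ r : ℝ, 0 < r → 0 < (μ (Metric.ball x r)).toReal)
    (hVlim : ∀ x : X,
      Tendsto (fun r : ℝ => (μ (Metric.ball x r)).toReal / r ^ m)
        (nhdsWithin 0 (Set.Ioi 0)) (nhds (unitBallVolume m)))
    (hSob : ∀ x : X, ∀ r : ℝ, 0 < r →
      (μ (Metric.ball x r)).toReal ^ (((m : ℝ) - 1) / (m : ℝ)) ≤
        c * (Filter.liminf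
              (fun s : ℝ =>
                ((μ (Metric.ball x (r + s))).toReal - (μ (Metric.ball x r)).toReal) / s)
              (nhdsWithin 0 (Set.Ioi 0))
            + ∫ y in Metric.ball x r, f y ∂μ)) :
    Metric.diam (Set.univ : Set X) ≤ 4 * δ ^ (1 - (m : ℝ)) * ∫ x, f x ^ (m - 1) ∂μ :=
  diameter_bound_of_sobolev_inequality_general μ m hm geodesic f hf0 hfint hfmint c δ hc hδ0 hδω hδc
    hVcont hVlim hSob
end

section
/- Let m ≥ 2 be an integer, let (X,d) be a metric space, μ a Borel measure on X, f:X→[0,∞) μ-measurable, and let x∈X and R>0. Let c>0 and δ∈(0,ω_m) be constants satisfying m·δ + δ^{(2m−3)/(m−1)} ≤ c^{−1}·δ^{(m−1)/m}. Assume: (i) r ↦ V(x,r) is continuous and positive on (0,R]; (ii) V(x,r)/r^m → ω_m as r→0⁺; and (iii) for every r∈(0,R], V(x,r)^{(m−1)/m} ≤ c·( D⁺V(x,·)(r) + ∫_{B(x,r)} f dμ ). Then at least one of the following holds: (1) the maximal function satisfies M_f(x,R) ≥ δ; (2) the volume ratio satisfies κ(x,R) > δ. (This is a metric-measure formulation of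 the paper's Lemma 2.1, where f = |H| and hypothesis (iii) encodes the Hoffman–Spruck Sobolev inequality applied to distance-function cutoffs, with c = c(m,α).) -/
/-! If the maximal function stays below `δ` on `(0, R]`, the Sobolev inequality and the choice
of `δ` give `D⁺V(r) > (δ r^m)'` wherever `V(r) ≥ δ r^m`. Since `V(r)/r^m → ω_m > δ`, the volume
`V` exceeds `δ r^m` by a positive margin at some small radius `ε`, and the fencing (comparison)
principle for Dini derivatives keeps this margin on `[ε, R]`, which bounds the volume ratio away
from `δ`. -/

open MeasureTheory Filter Set Topology

/-- As a real `liminf`, `D⁺g(x)` is junk unless the difference quotients are eventually bounded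
below, e.g. for `g` monotone to the right of `x`. -/
noncomputable def lowerRightDini (g : ℝ → ℝ) (x : ℝ) : ℝ :=
  liminf (fun s => (g (x + s) - g x) / s) (𝓝[>] 0)

lemma eventually_lt_slope_of_lt_lowerRightDini {g : ℝ → ℝ} {x b L : ℝ} (hxb : x < b)
    (hg : MonotoneOn g (Icc x b)) (h : L < lowerRightDini g x) :
    ∀ᶠ z in 𝓝[>] x, L < slope g x z := by
  have hshift : Tendsto (· - x) (𝓝[>] x) (𝓝[>] 0) :=
    tendsto_nhdsWithin_of_tendsto_nhds_of_eventually_within _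
      (((continuous_sub_right x).tendsto' x 0 (sub_self x)).mono_left nhdsWithin_le_nhds)
      (eventually_nhdsWithin_of_forall fun _ hz => sub_pos.2 (mem_Ioi.1 hz))
  have hnonneg : ∀ᶠ s in 𝓝[>] (0 : ℝ), 0 ≤ (g (x + s) - g x) / s := by
    filter_upwards [Ioo_mem_nhdsGT (sub_pos.2 hxb)] with s hs
    have hmono : g x ≤ g (x + s) :=
      hg ⟨le_rfl, hxb.le⟩ ⟨by linarith [hs.1], by linarith [hs.2]⟩ (by linarith [hs.1])
    exact div_nonneg (sub_nonneg.2 hmono) hs.1.le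
  filter_upwards [hshift.eventually
    (eventually_lt_of_lt_liminf h (isBoundedUnder_of_eventually_ge hnonneg))] with z hz
  rwa [add_sub_cancel, ← slope_def_field] at hz

lemma le_image_of_lt_lowerRightDini_boundary {f φ φ' : ℝ → ℝ} {a b : ℝ}
    (hf : ContinuousOn f (Icc a b)) (hmono : MonotoneOn f (Icc a b)) (ha : φ a ≤ f a)
    (hφ : ∀ x, HasDerivAt φ (φ' x) x)
    (bound : ∀ x ∈ Ico a b, f x = φ x → φ' x < lowerRightDini f x) :
    ∀ ⦃x⦄, x ∈ Icc a b → φ x ≤ f x := by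
  intro x hx
  have := image_le_of_liminf_slope_right_lt_deriv_boundary (f := fun y => -f y)
    (f' := fun y => -lowerRightDini f y) (B := fun y => -φ y) (B' := fun y => -φ' y) hf.neg
    ?_ (neg_le_neg ha) (fun y => (hφ y).neg) ?_ hx
  · exact neg_le_neg_iff.1 this
  · intro y hy r hr
    refine (eventually_lt_slope_of_lt_lowerRightDini hy.2
      (hmono.mono (Icc_subset_Icc_left hy.1)) (neg_lt.1 hr)).frequently.mono fun z hz => ?_
    rw [slope_neg]
    exact neg_lt.1 hz
  · intro y hy hfy
    exact neg_lt_neg (bound y hy (neg_inj.1 hfy))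

lemma monotoneOn_toReal_measure_ball {X : Type*} [PseudoMetricSpace X] [MeasurableSpace X]
    (μ : Measure X) (x : X) {R : ℝ} (hR : μ (Metric.ball x R) ≠ ⊤) :
    MonotoneOn (fun r => (μ (Metric.ball x r)).toReal) (Iic R) := fun _ _ _ hb hab =>
  ENNReal.toReal_mono (ne_top_of_le_ne_top hR (measure_mono (Metric.ball_subset_ball hb)))
    (measure_mono (Metric.ball_subset_ball hab))

lemma add_div_pow_le_div_pow {m : ℕ} {δ C v r R : ℝ} (hC : 0 ≤ C) (hr : 0 < r) (hrR : r ≤ R)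
    (h : δ * r ^ m + C ≤ v) : δ + C / R ^ m ≤ v / r ^ m := by
  have hrm : 0 < r ^ m := pow_pos hr m
  have hrRm : r ^ m ≤ R ^ m := pow_le_pow_left₀ hr.le hrR m
  have hCR : C / R ^ m * r ^ m ≤ C := by
    rw [div_mul_eq_mul_div, div_le_iff₀ (hrm.trans_le hrRm)]
    exact mul_le_mul_of_nonneg_left hrRm hC
  rw [le_div_iff₀ hrm]
  linarith

lemma nat_mul_pow_pred_add_le_of_mul_pow_le {m : ℕ} (hm : 2 ≤ m) {c δ w V : ℝ} (hδ : 0 < δ)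
    (hw : 0 < w)
    (hδc : (m : ℝ) * δ + δ ^ ((2 * (m : ℝ) - 3) / ((m : ℝ) - 1)) ≤
      c⁻¹ * δ ^ (((m : ℝ) - 1) / (m : ℝ)))
    (hV : δ * w ^ m ≤ V) :
    δ * (m * w ^ (m - 1)) +
        δ * w ^ (1 / ((m : ℝ) - 1)) * V ^ (((m : ℝ) - 2) / ((m : ℝ) - 1)) ≤
      c⁻¹ * V ^ (((m : ℝ) - 1) / (m : ℝ)) := by
  -- Write `V = t δ w^m` with `t ≥ 1`: both sides become multiples of `w^(m-1)`, and the claim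
  -- reduces to `hδc` because `t^q ≤ t^p`.
  have hm' : (2 : ℝ) ≤ m := by exact_mod_cast hm
  have hm1 : (0 : ℝ) < m - 1 := by linarith
  set p := ((m : ℝ) - 1) / m
  set q := ((m : ℝ) - 2) / ((m : ℝ) - 1)
  set e := (2 * (m : ℝ) - 3) / ((m : ℝ) - 1)
  have hδw : 0 < δ * w ^ m := by positivity
  obtain ⟨t, ht, rfl⟩ : ∃ t, 1 ≤ t ∧ V = t * (δ * w ^ m) :=
    ⟨V / (δ * w ^ m), (one_le_div hδw).2 hV, (div_mul_cancel₀ V hδw.ne').symm⟩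
  have ht0 : 0 ≤ t := zero_le_one.trans ht
  have hw1 : w ^ (m - 1) = w ^ ((m : ℝ) - 1) := by
    rw [← Real.rpow_natCast, Nat.cast_pred (by omega)]
  have hwm : w ^ m = w ^ (m : ℝ) := (Real.rpow_natCast w m).symm
  have hVp : (t * (δ * w ^ m)) ^ p = t ^ p * δ ^ p * w ^ ((m : ℝ) - 1) := by
    rw [Real.mul_rpow ht0 hδw.le, Real.mul_rpow hδ.le (by positivity), hwm,
      ← Real.rpow_mul hw.le, mul_div_cancel₀ _ (by positivity : (m : ℝ) ≠ 0), mul_assoc]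
  have hVq : δ * w ^ (1 / ((m : ℝ) - 1)) * (t * (δ * w ^ m)) ^ q =
      t ^ q * δ ^ e * w ^ ((m : ℝ) - 1) := by
    rw [Real.mul_rpow ht0 hδw.le, Real.mul_rpow hδ.le (by positivity), hwm,
      ← Real.rpow_mul hw.le]
    have he : e = 1 + q := by simp only [e, q]; field_simp; ring
    have hwq : w ^ (1 / ((m : ℝ) - 1)) * w ^ ((m : ℝ) * q) = w ^ ((m : ℝ) - 1) := by
      rw [← Real.rpow_add hw]; congr 1; simp only [q]; field_simp; ring
    rw [he, Real.rpow_add hδ, Real.rpow_one, ← hwq]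
    ring
  rw [hVp, hVq, hw1]
  have htq : t ^ q ≤ t ^ p := Real.rpow_le_rpow_of_exponent_le ht (by
    simp only [p, q]; rw [div_le_div_iff₀ hm1 (by linarith)]; nlinarith)
  have htp : 1 ≤ t ^ p := Real.one_le_rpow ht (by positivity)
  have hδe : 0 ≤ δ ^ e := by positivity
  have hcoef : (m : ℝ) * δ + δ ^ e * t ^ q ≤ c⁻¹ * δ ^ p * t ^ p := by
    nlinarith [mul_le_mul_of_nonneg_right hδc (zero_le_one.trans htp),
      mul_le_mul_of_nonneg_left htp (by positivity : (0 : ℝ) ≤ m * δ),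
      mul_le_mul_of_nonneg_left htq hδe]
  linarith [mul_le_mul_of_nonneg_right hcoef (by positivity : (0 : ℝ) ≤ w ^ ((m : ℝ) - 1))]

lemma nat_mul_pow_pred_lt_of_sobolev {m : ℕ} (hm : 2 ≤ m) {c δ w V D I : ℝ} (hc : 0 < c)
    (hδ : 0 < δ) (hw : 0 < w)
    (hδc : (m : ℝ) * δ + δ ^ ((2 * (m : ℝ) - 3) / ((m : ℝ) - 1)) ≤
      c⁻¹ * δ ^ (((m : ℝ) - 1) / (m : ℝ)))
    (hV : δ * w ^ m ≤ V) (hsob : V ^ (((m : ℝ) - 1) / (m : ℝ)) ≤ c * (D + I))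
    (hI : w ^ (-(1 / ((m : ℝ) - 1))) * V ^ (-(((m : ℝ) - 2) / ((m : ℝ) - 1))) * I < δ) :
    δ * (m * w ^ (m - 1)) < D := by
  have hV0 : 0 < V := (by positivity : 0 < δ * w ^ m).trans_le hV
  rw [Real.rpow_neg hw.le, Real.rpow_neg hV0.le] at hI
  set a := w ^ (1 / ((m : ℝ) - 1))
  set b := V ^ (((m : ℝ) - 2) / ((m : ℝ) - 1))
  have ha : 0 < a := by positivity
  have hb : 0 < b := by positivity
  have hIab : I < δ * a * b := calc
    I = a⁻¹ * b⁻¹ * I * (a * b) := by field_simp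
    _ < δ * (a * b) := mul_lt_mul_of_pos_right hI (mul_pos ha hb)
    _ = δ * a * b := by ring
  have hD : c⁻¹ * V ^ (((m : ℝ) - 1) / (m : ℝ)) ≤ D + I := (inv_mul_le_iff₀ hc).2 hsob
  linarith [nat_mul_pow_pred_add_le_of_mul_pow_le hm hδ hw hδc hV]

theorem maximal_function_or_volume_ratio_general
    {X : Type*} [MetricSpace X] [MeasurableSpace X]
    (μ : Measure X)
    (m : ℕ) (hm : 2 ≤ m)
    (f : X → ℝ)
    (x : X) (R : ℝ) (hR : 0 < R)
    (c δ : ℝ) (hc : 0 < c) (hδ0 : 0 < δ) (hδω : δ < unitBallVolume m)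
    (hδc : (m : ℝ) * δ + δ ^ ((2 * (m : ℝ) - 3) / ((m : ℝ) - 1)) ≤
      c⁻¹ * δ ^ (((m : ℝ) - 1) / (m : ℝ)))
    (hVcont : ContinuousOn (fun r : ℝ => (μ (Metric.ball x r)).toReal) (Set.Ioc 0 R))
    (hVpos : ∀ r ∈ Set.Ioc (0 : ℝ) R, 0 < (μ (Metric.ball x r)).toReal)
    (hVlim : Tendsto (fun r : ℝ => (μ (Metric.ball x r)).toReal / r ^ m)
      (nhdsWithin 0 (Set.Ioi 0)) (nhds (unitBallVolume m)))
    (hSob : ∀ r ∈ Set.Ioc (0 : ℝ) R,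
      (μ (Metric.ball x r)).toReal ^ (((m : ℝ) - 1) / (m : ℝ)) ≤
        c * (Filter.liminf
              (fun s : ℝ =>
                ((μ (Metric.ball x (r + s))).toReal - (μ (Metric.ball x r)).toReal) / s)
              (nhdsWithin 0 (Set.Ioi 0))
            + ∫ y in Metric.ball x r, f y ∂μ)) :
    (∃ r ∈ Set.Ioc (0 : ℝ) R,
        δ ≤ r ^ (-(1 / ((m : ℝ) - 1))) *
          (μ (Metric.ball x r)).toReal ^ (-(((m : ℝ) - 2) / ((m : ℝ) - 1))) *
          ∫ y in Metric.ball x r, f y ∂μ) ∨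
      δ < sInf {v : ℝ | ∃ r ∈ Set.Ioc (0 : ℝ) R,
        v = (μ (Metric.ball x r)).toReal / r ^ m} := by
  refine or_iff_not_imp_left.2 fun hmax => ?_
  simp only [not_exists, not_and, not_le] at hmax
  have hVmono := monotoneOn_toReal_measure_ball μ x
    (ENNReal.toReal_pos_iff.1 (hVpos R ⟨hR, le_rfl⟩)).2.ne
  obtain ⟨δ₂, hδδ₂, hδ₂ω⟩ := exists_between hδω
  obtain ⟨ε, hε, hsmall⟩ :=
    mem_nhdsGT_iff_exists_Ioc_subset.1 (hVlim.eventually (eventually_gt_nhds hδ₂ω))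
  have hgap : δ * ε ^ m < (μ (Metric.ball x ε)).toReal :=
    (mul_lt_mul_of_pos_right hδδ₂ (pow_pos hε m)).trans
      ((lt_div_iff₀ (pow_pos hε m)).1 (hsmall ⟨hε, le_rfl⟩))
  have hIcc : Icc ε R ⊆ Ioc 0 R := fun r hr => ⟨hε.trans_le hr.1, hr.2⟩
  have hfar : ∀ r ∈ Icc ε R,
      δ * r ^ m + ((μ (Metric.ball x ε)).toReal - δ * ε ^ m) ≤ (μ (Metric.ball x r)).toReal :=
    le_image_of_lt_lowerRightDini_boundary (hVcont.mono hIcc)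
      (hVmono.mono fun r hr => hr.2) (by rw [add_sub_cancel])
      (fun r => ((hasDerivAt_pow m r).const_mul δ).add_const _)
      fun r hr hr_eq => nat_mul_pow_pred_lt_of_sobolev hm hc hδ0 (hε.trans_le hr.1) hδc
        (hr_eq ▸ le_add_of_nonneg_right (sub_nonneg.2 hgap.le))
        (hSob r (hIcc (Ico_subset_Icc_self hr))) (hmax r (hIcc (Ico_subset_Icc_self hr)))
  refine (lt_min hδδ₂ (lt_add_of_pos_right δ (div_pos (sub_pos.2 hgap) (pow_pos hR m)))).trans_le
    (le_csInf ⟨_, R, ⟨hR, le_rfl⟩, rfl⟩ ?_)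
  rintro _ ⟨r, hr, rfl⟩
  rcases le_or_gt r ε with hrε | hεr
  · exact (min_le_left _ _).trans (hsmall ⟨hr.1, hrε⟩).le
  · exact (min_le_right _ _).trans (add_div_pow_le_div_pow (sub_pos.2 hgap).le hr.1 hr.2
      (hfar r ⟨hεr.le, hr.2⟩))

/-- **Lemma 2.1 (metric-measure form).** Let `m ≥ 2`, `x ∈ X`, `R > 0`, and let `c > 0`,
`δ ∈ (0, ω_m)` satisfy `m δ + δ^((2m-3)/(m-1)) ≤ c⁻¹ δ^((m-1)/m)`. Assume
`V(x,r) = μ(B(x,r))` is continuous and positive on `(0,R]`, `V(x,r)/r^m → ω_m` as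
`r → 0⁺`, and `V(x,r)^((m-1)/m) ≤ c (D⁺V(x,·)(r) + ∫_{B(x,r)} f dμ)` for `r ∈ (0,R]`.
Then either the maximal function
`M_f(x,R) = sup_{r ∈ (0,R]} r^(-1/(m-1)) V(x,r)^(-(m-2)/(m-1)) ∫_{B(x,r)} f dμ`
is at least `δ` (there exists `r ∈ (0,R]` where the quantity is at least `δ`), or the
volume ratio `κ(x,R) = inf_{r ∈ (0,R]} V(x,r)/r^m` is greater than `δ`. -/
theorem maximal_function_or_volume_ratio
    {X : Type*} [MetricSpace X] [MeasurableSpace X] [BorelSpace X]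
    (μ : Measure X)
    (m : ℕ) (hm : 2 ≤ m)
    (f : X → ℝ) (hf0 : ∀ x, 0 ≤ f x) (hfmeas : Measurable f)
    (x : X) (R : ℝ) (hR : 0 < R)
    (c δ : ℝ) (hc : 0 < c) (hδ0 : 0 < δ) (hδω : δ < unitBallVolume m)
    (hδc : (m : ℝ) * δ + δ ^ ((2 * (m : ℝ) - 3) / ((m : ℝ) - 1)) ≤
      c⁻¹ * δ ^ (((m : ℝ) - 1) / (m : ℝ)))
    (hVcont : ContinuousOn (fun r : ℝ => (μ (Metric.ball x r)).toReal) (Set.Ioc 0 R))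
    (hVpos : ∀ r ∈ Set.Ioc (0 : ℝ) R, 0 < (μ (Metric.ball x r)).toReal)
    (hVlim : Tendsto (fun r : ℝ => (μ (Metric.ball x r)).toReal / r ^ m)
      (nhdsWithin 0 (Set.Ioi 0)) (nhds (unitBallVolume m)))
    (hSob : ∀ r ∈ Set.Ioc (0 : ℝ) R,
      (μ (Metric.ball x r)).toReal ^ (((m : ℝ) - 1) / (m : ℝ)) ≤
        c * (Filter.liminf
              (fun s : ℝ =>
                ((μ (Metric.ball x (r + s))).toReal - (μ (Metric.ball x r)).toReal) / s)
              (nhdsWithin 0 (Set.Ioi 0))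
            + ∫ y in Metric.ball x r, f y ∂μ)) :
    (∃ r ∈ Set.Ioc (0 : ℝ) R,
        δ ≤ r ^ (-(1 / ((m : ℝ) - 1))) *
          (μ (Metric.ball x r)).toReal ^ (-(((m : ℝ) - 2) / ((m : ℝ) - 1))) *
          ∫ y in Metric.ball x r, f y ∂μ) ∨
      δ < sInf {v : ℝ | ∃ r ∈ Set.Ioc (0 : ℝ) R,
        v = (μ (Metric.ball x r)).toReal / r ^ m} :=
  maximal_function_or_volume_ratio_general μ m hm f x R hR c δ hc hδ0 hδω hδc hVcont hVpos hVlim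
    hSob
end

section
/- Let m ≥ 2 be an integer, R > 0, c > 0 and δ ∈ (0, ω_m) with m·δ + δ^{(2m−3)/(m−1)} − c^{−1}·δ^{(m−1)/m} ≤ 0. Let V:(0,R]→(0,∞) be continuous with V(r)/r^m → ω_m as r→0⁺, and suppose that for every r∈(0,R] the lower right Dini derivative satisfies D⁺V(r) + δ·r^{1/(m−1)}·V(r)^{(m−2)/(m−1)} − c^{−1}·V(r)^{(m−1)/m} > 0. Then V(r) > δ·r^m for every r∈(0,R]. (This is the differential-inequality comparison argument at the core of the proof of the paper's Lemma 2.1, comparing V with v(r) = δ r^m.) -/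
open MeasureTheory Filter Set

lemma keyAlg (m : ℕ) (hm : 2 ≤ m) (c δ p x : ℝ) (hc : 0 < c) (hδ0 : 0 < δ)
    (hδc : (m : ℝ) * δ + δ ^ ((2 * (m : ℝ) - 3) / ((m : ℝ) - 1)) -
      c⁻¹ * δ ^ (((m : ℝ) - 1) / (m : ℝ)) ≤ 0)
    (hp : 0 < p) (hx : δ * p ^ m ≤ x) :
    (m : ℝ) * δ * p ^ (m - 1) ≤
      c⁻¹ * x ^ (((m : ℝ) - 1) / (m : ℝ))
        - δ * p ^ ((1 : ℝ) / ((m : ℝ) - 1)) * x ^ (((m : ℝ) - 2) / ((m : ℝ) - 1)) := by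
  have hm2 : (2 : ℝ) ≤ (m : ℝ) := by exact_mod_cast hm
  have hM : (0 : ℝ) < m := by linarith
  have hM1 : (0 : ℝ) < (m : ℝ) - 1 := by linarith
  have hM2 : (0 : ℝ) ≤ (m : ℝ) - 2 := by linarith
  have hpm : (0 : ℝ) < δ * p ^ m := by positivity
  obtain ⟨t, ht1, rfl⟩ : ∃ t, 1 ≤ t ∧ x = δ * p ^ m * t :=
    ⟨x / (δ * p ^ m), (one_le_div hpm).2 hx, by field_simp⟩
  have ht0 : (0 : ℝ) < t := lt_of_lt_of_le one_pos ht1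
  set e1 : ℝ := ((m : ℝ) - 1) / (m : ℝ) with he1
  set e2 : ℝ := ((m : ℝ) - 2) / ((m : ℝ) - 1) with he2
  have he1nn : 0 ≤ e1 := by positivity
  have he2nn : 0 ≤ e2 := by positivity
  have h1 : (δ * p ^ m * t) ^ e1 = δ ^ e1 * p ^ ((m : ℝ) - 1) * t ^ e1 := by
    rw [Real.mul_rpow hpm.le ht0.le, Real.mul_rpow hδ0.le (by positivity),
      ← Real.rpow_natCast p m, ← Real.rpow_mul hp.le]
    have : (m : ℝ) * e1 = (m : ℝ) - 1 := by rw [he1]; field_simp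
    rw [this]
  have h2 : (δ * p ^ m * t) ^ e2 = δ ^ e2 * p ^ ((m : ℝ) * e2) * t ^ e2 := by
    rw [Real.mul_rpow hpm.le ht0.le, Real.mul_rpow hδ0.le (by positivity),
      ← Real.rpow_natCast p m, ← Real.rpow_mul hp.le]
  have hpp : p ^ ((1 : ℝ) / ((m : ℝ) - 1)) * p ^ ((m : ℝ) * e2) = p ^ ((m : ℝ) - 1) := by
    rw [← Real.rpow_add hp]
    congr 1
    rw [he2]
    field_simp
    ring
  have hδδ : δ * δ ^ e2 = δ ^ ((2 * (m : ℝ) - 3) / ((m : ℝ) - 1)) := by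
    nth_rewrite 1 [← Real.rpow_one δ]
    rw [← Real.rpow_add hδ0]
    congr 1
    rw [he2]
    field_simp
    ring
  set A : ℝ := δ ^ ((2 * (m : ℝ) - 3) / ((m : ℝ) - 1)) with hA
  have key : c⁻¹ * (δ * p ^ m * t) ^ e1
      - δ * p ^ ((1 : ℝ) / ((m : ℝ) - 1)) * (δ * p ^ m * t) ^ e2
      = p ^ ((m : ℝ) - 1) * (c⁻¹ * δ ^ e1 * t ^ e1 - A * t ^ e2) := by
    rw [h1, h2]
    linear_combination (- t ^ e2 * A) * hpp
      + (- t ^ e2 * (p ^ ((1 : ℝ) / ((m : ℝ) - 1)) * p ^ ((m : ℝ) * e2))) * hδδ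
  rw [key]
  -- bracket bound
  have ht12 : t ^ e2 ≤ t ^ e1 := by
    apply Real.rpow_le_rpow_of_exponent_le ht1
    rw [he1, he2, div_le_div_iff₀ hM1 hM]
    nlinarith
  have ht11 : 1 ≤ t ^ e1 := by
    calc (1:ℝ) = t ^ (0:ℝ) := (Real.rpow_zero t).symm
    _ ≤ t ^ e1 := Real.rpow_le_rpow_of_exponent_le ht1 he1nn
  have hA0 : 0 ≤ A := Real.rpow_nonneg hδ0.le _
  have hbr : (m : ℝ) * δ ≤ c⁻¹ * δ ^ e1 * t ^ e1 - A * t ^ e2 := by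
    have hδcA : (m : ℝ) * δ + A ≤ c⁻¹ * δ ^ e1 := by rw [hA, he1]; linarith
    nlinarith [mul_nonneg hA0 (sub_nonneg.2 ht12), mul_nonneg (by positivity : (0:ℝ) ≤ (m:ℝ) * δ) (sub_nonneg.2 ht11)]
  have hPn : (0:ℝ) ≤ p ^ ((m : ℝ) - 1) := Real.rpow_nonneg hp.le _
  have hPeq : p ^ ((m : ℝ) - 1) = p ^ (m - 1) := by
    rw [← Real.rpow_natCast p (m - 1)]
    congr 1
    have : ((m - 1 : ℕ) : ℝ) = (m : ℝ) - 1 := by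
      have : 1 ≤ m := by omega
      push_cast [Nat.cast_sub this]
      ring
    rw [this]
  calc (m : ℝ) * δ * p ^ (m - 1) = p ^ ((m : ℝ) - 1) * ((m:ℝ) * δ) := by rw [hPeq]; ring
  _ ≤ p ^ ((m : ℝ) - 1) * (c⁻¹ * δ ^ e1 * t ^ e1 - A * t ^ e2) :=
      mul_le_mul_of_nonneg_left hbr hPn


/-- **Differential-inequality comparison.** Let `m ≥ 2`, `R > 0`, `c > 0` and
`δ ∈ (0, ω_m)` with `m δ + δ^((2m-3)/(m-1)) - c⁻¹ δ^((m-1)/m) ≤ 0`. If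
`V : (0,R] → (0,∞)` is continuous with `V(r)/r^m → ω_m` as `r → 0⁺` and the lower right
Dini derivative satisfies
`D⁺V(r) + δ r^(1/(m-1)) V(r)^((m-2)/(m-1)) - c⁻¹ V(r)^((m-1)/m) > 0` on `(0,R]`, then
`V(r) > δ r^m` for all `r ∈ (0,R]`. -/
theorem volume_comparison_of_dini_inequality
    (m : ℕ) (hm : 2 ≤ m)
    (R c δ : ℝ) (hR : 0 < R) (hc : 0 < c)
    (hδ0 : 0 < δ) (hδω : δ < unitBallVolume m)
    (hδc : (m : ℝ) * δ + δ ^ ((2 * (m : ℝ) - 3) / ((m : ℝ) - 1)) -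
      c⁻¹ * δ ^ (((m : ℝ) - 1) / (m : ℝ)) ≤ 0)
    (V : ℝ → ℝ)
    (hVcont : ContinuousOn V (Set.Ioc 0 R))
    (hVpos : ∀ r ∈ Set.Ioc (0 : ℝ) R, 0 < V r)
    (hVlim : Tendsto (fun r : ℝ => V r / r ^ m)
      (nhdsWithin 0 (Set.Ioi 0)) (nhds (unitBallVolume m)))
    (hdini : ∀ r ∈ Set.Ioc (0 : ℝ) R,
      0 < Filter.liminf (fun s : ℝ => (V (r + s) - V r) / s) (nhdsWithin 0 (Set.Ioi 0))
          + δ * r ^ ((1 : ℝ) / ((m : ℝ) - 1)) * V r ^ (((m : ℝ) - 2) / ((m : ℝ) - 1))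
          - c⁻¹ * V r ^ (((m : ℝ) - 1) / (m : ℝ))) :
    ∀ r ∈ Set.Ioc (0 : ℝ) R, δ * r ^ m < V r := by
  -- small radii: V r / r^m eventually above δ
  have hev : ∀ᶠ x in nhdsWithin (0:ℝ) (Set.Ioi 0), δ < V x / x ^ m :=
    (tendsto_order.1 hVlim).1 δ hδω
  obtain ⟨u, hu0, hu⟩ := mem_nhdsGT_iff_exists_Ioc_subset.1 hev
  intro r hr
  set a := min u r with ha
  have ha0 : 0 < a := lt_min hu0 hr.1
  have har : a ≤ r := min_le_right _ _
  have hfa : δ * a ^ m < V a := by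
    have h1 : δ < V a / a ^ m := hu ⟨ha0, min_le_left _ _⟩
    have h2 : 0 < a ^ m := pow_pos ha0 m
    have := (lt_div_iff₀ h2).1 h1
    linarith
  by_contra hcon
  push_neg at hcon
  set f : ℝ → ℝ := fun x => V x - δ * x ^ m with hf
  -- the key "eventual increase" step
  have step : ∀ p ∈ Set.Icc a r, 0 < f p →
      ∀ᶠ s in nhdsWithin (0:ℝ) (Set.Ioi 0), f p < f (p + s) := by
    intro p hp hfp
    have hp0 : 0 < p := lt_of_lt_of_le ha0 hp.1
    have hpR : p ∈ Set.Ioc (0:ℝ) R := ⟨hp0, hp.2.trans hr.2⟩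
    have hVp : δ * p ^ m ≤ V p := by
      have : 0 < V p - δ * p ^ m := hfp
      linarith
    have hA := keyAlg m hm c δ p (V p) hc hδ0 hδc hp0 hVp
    have hd := hdini p hpR
    set L := Filter.liminf (fun s : ℝ => (V (p + s) - V p) / s)
        (nhdsWithin 0 (Set.Ioi 0)) with hL
    have hLb : (m : ℝ) * δ * p ^ (m - 1) < L := by linarith
    -- extract an eventual lower bound K on the slopes
    set S := {b : ℝ | ∀ᶠ s in nhdsWithin (0:ℝ) (Set.Ioi 0), b ≤ (V (p + s) - V p) / s}
      with hS
    have hLS : L = sSup S := Filter.liminf_eq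
    obtain ⟨K, hKS, hKb⟩ : ∃ K ∈ S, (m : ℝ) * δ * p ^ (m - 1) < K := by
      by_contra hcon2
      push_neg at hcon2
      have : sSup S ≤ (m : ℝ) * δ * p ^ (m - 1) :=
        Real.sSup_le hcon2 (by positivity)
      rw [hLS] at hLb
      linarith
    -- slopes of the barrier tend to its derivative, which is < K
    have hder : HasDerivAt (fun y : ℝ => δ * y ^ m) (δ * ((m : ℝ) * p ^ (m - 1))) p :=
      (hasDerivAt_pow m p).const_mul δ
    have hmap : Tendsto (fun s : ℝ => p + s) (nhdsWithin (0:ℝ) (Set.Ioi 0))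
        (nhdsWithin p {p}ᶜ) := by
      rw [tendsto_nhdsWithin_iff]
      constructor
      · have h0 : Tendsto (fun s : ℝ => p + s) (nhds (0:ℝ)) (nhds p) := by
          simpa using (tendsto_id (x := nhds (0:ℝ))).const_add p
        exact h0.mono_left nhdsWithin_le_nhds
      · filter_upwards [self_mem_nhdsWithin] with s hs
        have : (0:ℝ) < s := hs
        simp only [Set.mem_compl_iff, Set.mem_singleton_iff]
        intro h
        nlinarith [h]
    have hslope : Tendsto (fun s : ℝ => slope (fun y : ℝ => δ * y ^ m) p (p + s))
        (nhdsWithin (0:ℝ) (Set.Ioi 0)) (nhds (δ * ((m : ℝ) * p ^ (m - 1)))) :=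
      (hasDerivAt_iff_tendsto_slope.1 hder).comp hmap
    have hvK : ∀ᶠ s in nhdsWithin (0:ℝ) (Set.Ioi 0),
        slope (fun y : ℝ => δ * y ^ m) p (p + s) < K := by
      apply hslope.eventually_lt_const
      calc δ * ((m : ℝ) * p ^ (m - 1)) = (m : ℝ) * δ * p ^ (m - 1) := by ring
      _ < K := hKb
    filter_upwards [hKS, hvK, self_mem_nhdsWithin] with s hsK hsv hs0
    have hs0' : (0:ℝ) < s := hs0
    rw [slope_def_field] at hsv
    have heq : (p + s - p) = s := by ring
    rw [heq] at hsv
    have h1 : K * s ≤ V (p + s) - V p := (le_div_iff₀ hs0').1 hsK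
    have h2 : δ * (p + s) ^ m - δ * p ^ m < K * s := by
      have := (div_lt_iff₀ hs0').1 hsv
      linarith
    simp only [hf]
    linarith
  -- the set of points where f stays at least f a
  set E := {x ∈ Set.Icc a r | f a ≤ f x} with hE
  have haE : a ∈ E := ⟨⟨le_refl a, har⟩, le_refl _⟩
  have hEbdd : BddAbove E := BddAbove.mono (fun x hx => hx.1) bddAbove_Icc
  have hfc : ContinuousOn f (Set.Icc a r) := by
    apply ContinuousOn.sub
    · exact hVcont.mono (fun x hx => ⟨lt_of_lt_of_le ha0 hx.1, hx.2.trans hr.2⟩)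
    · exact (continuous_const.mul (continuous_pow m)).continuousOn
  have hEclosed : IsClosed E := by
    have : E = Set.Icc a r ∩ f ⁻¹' (Set.Ici (f a)) := by
      ext x; simp [hE, Set.mem_sep_iff, and_comm]
    rw [this]
    exact hfc.preimage_isClosed_of_isClosed isClosed_Icc isClosed_Ici
  set w := sSup E with hw
  have hwE : w ∈ E := hEclosed.csSup_mem ⟨a, haE⟩ hEbdd
  have hfw : 0 < f w := lt_of_lt_of_le (by simpa [hf] using sub_pos.2 hfa) hwE.2
  rcases eq_or_lt_of_le hwE.1.2 with hwr | hwr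
  · -- w = r gives f r > 0, contradicting hcon
    have : f r ≤ 0 := by simp only [hf]; linarith
    rw [← hwr] at this
    linarith
  · -- w < r : push to the right, contradicting sSup
    have hstep := step w hwE.1 hfw
    have hsmall : Set.Ioo (0:ℝ) (r - w) ∈ nhdsWithin (0:ℝ) (Set.Ioi 0) :=
      Ioo_mem_nhdsGT_of_mem ⟨le_refl 0, by linarith⟩
    obtain ⟨s, hs1, hs2⟩ := (hstep.and (eventually_mem_set.2 hsmall)).exists
    obtain ⟨hs0, hsr⟩ := hs2
    have hwsE : w + s ∈ E := by
      refine ⟨⟨?_, ?_⟩, ?_⟩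
      · linarith [hwE.1.1]
      · linarith
      · linarith [hwE.2]
    have := le_csSup hEbdd hwsE
    rw [← hw] at this
    linarith
end

section
/- Let (X,d) be a metric space, μ a Borel measure on X, f:X→[0,∞) a μ-integrable function, C > 0, and L > 0. Let γ:[0,L]→X satisfy d(γ(s),γ(t)) = |s−t| for all s,t ∈ [0,L] (a unit-speed geodesic). Suppose r:X→(0,∞) is a function such that for every z in the image of γ one has r(z) ≤ C·∫_{B(z,r(z))} f dμ. Then L ≤ 4·C·∫_X f dμ. (This is the covering argument of Section 3 of the paper: the balls {B(z,r(z)) : z ∈ γ([0,L])} cover the geodesic, a countable disjoint subfamily covers at least a fraction ρ ∈ (0,1/2) of it in the sense ρL ≤ Σ_i 2r(z_i), and letting ρ → 1/2 gives the factor 4.) -/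
open MeasureTheory Set

/-- **Covering argument along a geodesic.** Let `μ` be a Borel measure on a metric space
`X`, `f : X → [0,∞)` integrable, `C > 0`, `L > 0`, and let `γ : [0,L] → X` be a
unit-speed geodesic. If `r : X → (0,∞)` satisfies
`r(z) ≤ C ∫_{B(z,r(z))} f dμ` for every `z` in the image of `γ`, then
`L ≤ 4 C ∫_X f dμ`. -/
theorem length_bound_of_ball_estimate
    {X : Type*} [MetricSpace X] [MeasurableSpace X] [BorelSpace X]
    (μ : Measure X)
    (f : X → ℝ) (hf0 : ∀ x, 0 ≤ f x) (hfint : Integrable f μ)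
    (C L : ℝ) (hC : 0 < C) (hL : 0 < L)
    (γ : ℝ → X)
    (hγ : ∀ s ∈ Set.Icc (0 : ℝ) L, ∀ t ∈ Set.Icc (0 : ℝ) L,
      dist (γ s) (γ t) = |s - t|)
    (r : X → ℝ) (hr0 : ∀ z, 0 < r z)
    (hball : ∀ z ∈ γ '' Set.Icc (0 : ℝ) L,
      r z ≤ C * ∫ y in Metric.ball z (r z), f y ∂μ) :
    L ≤ 4 * C * ∫ x, f x ∂μ := by
  classical
  set R : ℝ → ℝ := fun t => r (γ t) with hRdef
  have hRpos : ∀ t, 0 < R t := fun t => hr0 _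
  -- finite subcover of [0,L] by the open intervals (t - R t, t + R t)
  obtain ⟨b, hbsub, hbfin, hbcov⟩ := isCompact_Icc.elim_finite_subcover_image
    (b := Icc (0:ℝ) L) (c := fun t => Ioo (t - R t) (t + R t))
    (fun i _ => isOpen_Ioo)
    (fun x hx => Set.mem_iUnion₂.2 ⟨x, hx, by
      constructor <;> linarith [hRpos x]⟩)
  set S : Finset ℝ := hbfin.toFinset with hSdef
  have hSIcc : ∀ u ∈ S, u ∈ Icc (0:ℝ) L := by
    intro u hu
    rw [hSdef, Set.Finite.mem_toFinset] at hu
    exact hbsub hu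
  have hScover : ∀ x ∈ Icc (0:ℝ) L, ∃ u ∈ S, u - R u < x ∧ x < u + R u := by
    intro x hx
    have := hbcov hx
    simp only [Set.mem_iUnion, Set.mem_Ioo] at this
    obtain ⟨i, hiT, h1, h2⟩ := this
    exact ⟨i, by rw [hSdef, Set.Finite.mem_toFinset]; exact hiT, h1, h2⟩
  -- main greedy chain induction
  have key : ∀ n : ℕ, ∀ x : ℝ, 0 ≤ x → x ≤ L →
      (S.filter (fun u => x < u + R u)).card ≤ n →
      ∃ t, ∃ A B : Finset ℝ, t ∈ S ∧ A ⊆ S ∧ B ⊆ S ∧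
        t - R t < x ∧ x < t + R t ∧
        (∀ u ∈ A, ∀ v ∈ A, u ≠ v → R u + R v ≤ |u - v|) ∧
        (∀ u ∈ B, ∀ v ∈ B, u ≠ v → R u + R v ≤ |u - v|) ∧
        (∀ u ∈ A, x ≤ u - R u) ∧
        (∀ u ∈ B, x ≤ u - R u) ∧
        (∀ u ∈ B, t + R t ≤ u - R u) ∧
        L - x < 2 * R t + (∑ u ∈ A, 2 * R u) + (∑ u ∈ B, 2 * R u) := by
    intro n
    induction n with
    | zero =>
      intro x hx0 hxL hcard
      obtain ⟨u, huS, _, hu2⟩ := hScover x ⟨hx0, hxL⟩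
      have hmem : u ∈ S.filter (fun u => x < u + R u) := Finset.mem_filter.2 ⟨huS, hu2⟩
      rw [Nat.le_zero, Finset.card_eq_zero] at hcard
      rw [hcard] at hmem
      exact absurd hmem (Finset.notMem_empty u)
    | succ n ih =>
      intro x hx0 hxL hcard
      obtain ⟨u₀, hu₀S, hu₀1, hu₀2⟩ := hScover x ⟨hx0, hxL⟩
      set D : Finset ℝ := S.filter (fun u => u - R u < x ∧ x < u + R u) with hDdef
      have hDne : D.Nonempty := ⟨u₀, Finset.mem_filter.2 ⟨hu₀S, hu₀1, hu₀2⟩⟩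
      obtain ⟨t, htD, hmax⟩ := D.exists_max_image (fun u => u + R u) hDne
      obtain ⟨htS, ht1, ht2⟩ := Finset.mem_filter.1 htD
      by_cases hx' : L < t + R t
      · refine ⟨t, ∅, ∅, htS, Finset.empty_subset _, Finset.empty_subset _, ht1, ht2,
          ?_, ?_, ?_, ?_, ?_, ?_⟩ <;> simp
        linarith
      · push_neg at hx'
        have hxx' : x < t + R t := ht2
        have hcard' : (S.filter (fun u => t + R t < u + R u)).card ≤ n := by
          have hss : S.filter (fun u => t + R t < u + R u) ⊂
              S.filter (fun u => x < u + R u) := by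
            constructor
            · intro u hu
              rw [Finset.mem_filter] at hu ⊢
              exact ⟨hu.1, lt_trans hxx' hu.2⟩
            · intro hsub
              have ht' := hsub (Finset.mem_filter.2 ⟨htS, hxx'⟩)
              rw [Finset.mem_filter] at ht'
              exact lt_irrefl _ ht'.2
          have := Finset.card_lt_card hss
          omega
        obtain ⟨t', A', B', ht'S, hA'S, hB'S, ht'1, ht'2, hsepA', hsepB',
          hA'left, hB'left, hB't', hlen'⟩ :=
          ih (t + R t) (by linarith) hx' hcard'
        have ht'left : x ≤ t' - R t' := by
          by_contra h
          push_neg at h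
          have ht'D : t' ∈ D := Finset.mem_filter.2 ⟨ht'S, h, by linarith⟩
          have := hmax t' ht'D
          linarith
        have ht'notB' : t' ∉ B' := by
          intro h
          have := hB't' t' h
          linarith [hRpos t']
        refine ⟨t, insert t' B', A', htS, Finset.insert_subset ht'S hB'S, hA'S,
          ht1, ht2, ?_, hsepA', ?_, ?_, ?_, ?_⟩
        · intro u hu v hv huv
          rcases Finset.mem_insert.1 hu with rfl | hu' <;>
            rcases Finset.mem_insert.1 hv with rfl | hv'
          · exact absurd rfl huv
          · have h1 := hB't' v hv'
            have : R u + R v ≤ v - u := by linarith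
            calc R u + R v ≤ v - u := this
              _ ≤ |v - u| := le_abs_self _
              _ = |u - v| := abs_sub_comm _ _
          · have h1 := hB't' u hu'
            have : R u + R v ≤ u - v := by linarith
            calc R u + R v ≤ u - v := this
              _ ≤ |u - v| := le_abs_self _
          · exact hsepB' u hu' v hv' huv
        · intro u hu
          rcases Finset.mem_insert.1 hu with rfl | hu'
          · exact ht'left
          · have := hB'left u hu'
            linarith
        · intro u hu
          have := hA'left u hu
          linarith
        · intro u hu
          exact hA'left u hu
        · rw [Finset.sum_insert ht'notB']
          linarith
  -- apply at x = 0
  obtain ⟨t, A, B, htS, hAS, hBS, ht1, ht2, hsepA, hsepB, hAleft, hBleft, hBt, hlen⟩ :=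
    key S.card 0 le_rfl hL.le (Finset.card_filter_le _ _)
  have htnotB : t ∉ B := by
    intro h
    have := hBt t h
    linarith [hRpos t]
  set F1 : Finset ℝ := insert t B with hF1def
  have hF1S : F1 ⊆ S := Finset.insert_subset htS hBS
  have hsepF1 : ∀ u ∈ F1, ∀ v ∈ F1, u ≠ v → R u + R v ≤ |u - v| := by
    intro u hu v hv huv
    rcases Finset.mem_insert.1 hu with rfl | hu' <;>
      rcases Finset.mem_insert.1 hv with rfl | hv'
    · exact absurd rfl huv
    · have h1 := hBt v hv'
      calc R u + R v ≤ v - u := by linarith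
        _ ≤ |v - u| := le_abs_self _
        _ = |u - v| := abs_sub_comm _ _
    · have h1 := hBt u hu'
      calc R u + R v ≤ u - v := by linarith
        _ ≤ |u - v| := le_abs_self _
    · exact hsepB u hu' v hv' huv
  have hlen1 : L < (∑ u ∈ F1, 2 * R u) + (∑ u ∈ A, 2 * R u) := by
    rw [hF1def, Finset.sum_insert htnotB]
    linarith
  -- choose the better half
  obtain ⟨G, hGS, hGsep, hGsum⟩ : ∃ G : Finset ℝ, G ⊆ S ∧
      (∀ u ∈ G, ∀ v ∈ G, u ≠ v → R u + R v ≤ |u - v|) ∧ L ≤ 4 * ∑ u ∈ G, R u := by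
    have e1 : ∑ u ∈ F1, 2 * R u = 2 * ∑ u ∈ F1, R u := by rw [Finset.mul_sum]
    have e2 : ∑ u ∈ A, 2 * R u = 2 * ∑ u ∈ A, R u := by rw [Finset.mul_sum]
    by_cases hc : (∑ u ∈ A, R u) ≤ ∑ u ∈ F1, R u
    · exact ⟨F1, hF1S, hsepF1, by linarith⟩
    · exact ⟨A, hAS, hsepA, by linarith⟩
  have hGIcc : ∀ u ∈ G, u ∈ Icc (0:ℝ) L := fun u hu => hSIcc u (hGS hu)
  -- the balls are pairwise disjoint
  have hdisj : (↑G : Set ℝ).Pairwise (Function.onFun Disjoint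
      (fun u => Metric.ball (γ u) (R u))) := by
    intro u hu v hv huv
    have hd : dist (γ u) (γ v) = |u - v| :=
      hγ u (hGIcc u (Finset.mem_coe.1 hu)) v (hGIcc v (Finset.mem_coe.1 hv))
    exact Metric.ball_disjoint_ball (by
      rw [hd]
      exact hGsep u (Finset.mem_coe.1 hu) v (Finset.mem_coe.1 hv) huv)
  have hsum_int : ∫ y in ⋃ u ∈ G, Metric.ball (γ u) (R u), f y ∂μ
      = ∑ u ∈ G, ∫ y in Metric.ball (γ u) (R u), f y ∂μ :=
    integral_biUnion_finset G (fun i _ => measurableSet_ball) hdisj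
      (fun i _ => hfint.integrableOn)
  have hle : ∫ y in ⋃ u ∈ G, Metric.ball (γ u) (R u), f y ∂μ ≤ ∫ x, f x ∂μ :=
    setIntegral_le_integral hfint (Filter.Eventually.of_forall hf0)
  have hG2 : ∀ u ∈ G, R u ≤ C * ∫ y in Metric.ball (γ u) (R u), f y ∂μ := fun u hu =>
    hball (γ u) ⟨u, hGIcc u hu, rfl⟩
  have hsum : ∑ u ∈ G, R u ≤ C * ∫ y in ⋃ u ∈ G, Metric.ball (γ u) (R u), f y ∂μ := by
    calc ∑ u ∈ G, R u ≤ ∑ u ∈ G, C * ∫ y in Metric.ball (γ u) (R u), f y ∂μ :=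
          Finset.sum_le_sum hG2
      _ = C * ∑ u ∈ G, ∫ y in Metric.ball (γ u) (R u), f y ∂μ := (Finset.mul_sum _ _ _).symm
      _ = C * ∫ y in ⋃ u ∈ G, Metric.ball (γ u) (R u), f y ∂μ := by rw [hsum_int]
  have hCf : C * (∫ y in ⋃ u ∈ G, Metric.ball (γ u) (R u), f y ∂μ) ≤ C * ∫ x, f x ∂μ :=
    mul_le_mul_of_nonneg_left hle hC.le
  have : (4:ℝ) * C * ∫ x, f x ∂μ = 4 * (C * ∫ x, f x ∂μ) := by ring
  linarith
end

section
/- Let d > 0, let r:[0,d]→(0,∞) be any function, and let ρ ∈ (0, 1/2). Then there exists a countable (possibly finite) set of points {t_i} ⊆ [0,d] such that the open intervals (t_i − r(t_i), t_i + r(t_i)) are pairwise disjoint and ρ·d ≤ Σ_i 2·r(t_i). (This is the one-dimensional form of the covering lemma—Lemma 5.2 of Topping's Ricci-flow diameter paper—used in the proof of the paper's main theorem: a geodesic of length d covered by the balls {B(z, r(z))} admits a countable disjoint subfamily of balls covering at least a fraction ρ of it.) -/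
/-!
If one interval is already long, `ρ d ≤ 2 r(t)`, it suffices alone. Otherwise the radii are
bounded by `ρ d / 2`, and the Vitali enlargement lemma yields a disjoint subfamily whose intervals,
enlarged by the factor `1 / ρ > 2`, still cover `[0, d]`; comparing Lebesgue measures gives
`d ≤ ρ⁻¹ Σ_i 2 r(t_i)`.
-/

open Set Metric MeasureTheory

theorem exists_countable_disjoint_balls_subset_iUnion_enlarged {α : Type*} [PseudoMetricSpace α]
    [TopologicalSpace.SeparableSpace α] (S : Set α) (r : α → ℝ) (hr : ∀ t ∈ S, 0 < r t)
    (R : ℝ) (hR : ∀ t ∈ S, r t ≤ R) {c : ℝ} (hc : 2 < c) :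
    ∃ u ⊆ S, u.Countable ∧ u.PairwiseDisjoint (fun t => ball t (r t)) ∧
      S ⊆ ⋃ t ∈ u, ball t (c * r t) := by
  obtain ⟨u, huS, hdisj, hcov⟩ := Vitali.exists_disjoint_subfamily_covering_enlargement
    (fun t => ball t (r t)) S r (c - 1) (by linarith) (fun t ht => (hr t ht).le) R hR
    (fun t ht => nonempty_ball.2 (hr t ht))
  refine ⟨u, huS, hdisj.countable_of_isOpen (fun _ _ => isOpen_ball)
    (fun t ht => nonempty_ball.2 (hr t (huS ht))), hdisj, fun a ha => ?_⟩
  obtain ⟨b, hb, hmeet, hle⟩ := hcov a ha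
  have hdist := dist_lt_add_of_nonempty_ball_inter_ball hmeet
  exact mem_biUnion hb (by rw [mem_ball]; linarith)

theorem Real.exists_countable_disjoint_balls_volume_le (S : Set ℝ) (r : ℝ → ℝ)
    (hr : ∀ t ∈ S, 0 < r t) (R : ℝ) (hR : ∀ t ∈ S, r t ≤ R) {c : ℝ} (hc : 2 < c) :
    ∃ u ⊆ S, u.Countable ∧ u.PairwiseDisjoint (fun t => ball t (r t)) ∧
      volume S ≤ ENNReal.ofReal c * ∑' t : u, ENNReal.ofReal (2 * r t) := by
  obtain ⟨u, huS, hu, hdisj, hcov⟩ :=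
    exists_countable_disjoint_balls_subset_iUnion_enlarged S r hr R hR hc
  refine ⟨u, huS, hu, hdisj, ?_⟩
  calc volume S ≤ volume (⋃ t ∈ u, ball t (c * r t)) := measure_mono hcov
    _ ≤ ∑' t : u, volume (ball (t : ℝ) (c * r t)) := measure_biUnion_le _ hu _
    _ = ∑' t : u, ENNReal.ofReal c * ENNReal.ofReal (2 * r t) := by
        congr 1 with t
        rw [Real.volume_ball, ← ENNReal.ofReal_mul (by linarith), mul_left_comm]
    _ = ENNReal.ofReal c * ∑' t : u, ENNReal.ofReal (2 * r t) := ENNReal.tsum_mul_left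

theorem covering_lemma_interval_general
    (d : ℝ) (r : ℝ → ℝ) (hr : ∀ t ∈ Set.Icc (0 : ℝ) d, 0 < r t)
    (ρ : ℝ) (hρ : ρ ∈ Set.Ioo (0 : ℝ) (1 / 2)) :
    ∃ s : Set ℝ, s.Countable ∧ s ⊆ Set.Icc (0 : ℝ) d ∧
      s.PairwiseDisjoint (fun t => Set.Ioo (t - r t) (t + r t)) ∧
      ENNReal.ofReal (ρ * d) ≤ ∑' t : s, ENNReal.ofReal (2 * r t) := by
  obtain ⟨hρ0, hρ2⟩ := hρ
  simp_rw [← Real.ball_eq_Ioo]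
  by_cases hlong : ∃ t ∈ Icc 0 d, ρ * d ≤ 2 * r t
  · obtain ⟨t, ht, hlong⟩ := hlong
    refine ⟨{t}, countable_singleton t, singleton_subset_iff.2 ht,
      pairwiseDisjoint_singleton _ _, ?_⟩
    rw [tsum_singleton t (fun x => ENNReal.ofReal (2 * r x))]
    exact ENNReal.ofReal_le_ofReal hlong
  push Not at hlong
  obtain ⟨u, huS, hu, hdisj, hvol⟩ := Real.exists_countable_disjoint_balls_volume_le
    (Icc 0 d) r hr (ρ * d / 2) (fun t ht => by linarith [hlong t ht]) (c := 1 / ρ)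
    (by rw [lt_div_iff₀ hρ0]; linarith)
  refine ⟨u, hu, huS, hdisj, ?_⟩
  calc ENNReal.ofReal (ρ * d) = ENNReal.ofReal ρ * volume (Icc 0 d) := by
        rw [Real.volume_Icc, sub_zero, ENNReal.ofReal_mul hρ0.le]
    _ ≤ ENNReal.ofReal ρ * (ENNReal.ofReal (1 / ρ) * ∑' t : u, ENNReal.ofReal (2 * r t)) := by
        gcongr
    _ = ∑' t : u, ENNReal.ofReal (2 * r t) := by
        rw [← mul_assoc, ← ENNReal.ofReal_mul hρ0.le, mul_one_div_cancel hρ0.ne',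
          ENNReal.ofReal_one, one_mul]

/-- **One-dimensional covering lemma.** Let `d > 0`, let `r : [0,d] → (0,∞)` be any
function, and let `ρ ∈ (0, 1/2)`. Then there is a countable (possibly finite) set of
points `{t_i} ⊆ [0,d]` such that the open intervals `(t_i - r(t_i), t_i + r(t_i))` are
pairwise disjoint and `ρ d ≤ Σ_i 2 r(t_i)`. -/
theorem covering_lemma_interval
    (d : ℝ) (hd : 0 < d) (r : ℝ → ℝ) (hr : ∀ t ∈ Set.Icc (0 : ℝ) d, 0 < r t)
    (ρ : ℝ) (hρ : ρ ∈ Set.Ioo (0 : ℝ) (1 / 2)) :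
    ∃ s : Set ℝ, s.Countable ∧ s ⊆ Set.Icc (0 : ℝ) d ∧
      s.PairwiseDisjoint (fun t => Set.Ioo (t - r t) (t + r t)) ∧
      ENNReal.ofReal (ρ * d) ≤ ∑' t : s, ENNReal.ofReal (2 * r t) :=
  covering_lemma_interval_general d r hr ρ hρ
end
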